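/- arXiv:2511.15879 — 5 statements merged into one kernel-verified Lean document; each statement's English description precedes it below -/
import Mathlib

section
/- Let d ≥ 2, I = (x_i···x_{i+d-1} : i=1,...,d+1) ⊂ K[x_1,...,x_{2d}], and Δ the simplicial complex on [2d] with Stanley–Reisner ideal I_Δ = ∂(I). Then every subset of [2d] of cardinality 2d-2 is not a face of Δ; in particular dim Δ ≤ 2d - 4. -/
open MvPolynomial

noncomputable section

/-- The polynomial ring `S = K[x_1,…,x_n]`. -/
abbrev MPoly (K : Type) [Field K] (n : ℕ) : Type := MvPolynomial (Fin n) K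

/-- The degree of the monomial `x^a`. -/
def mdeg {n : ℕ} (a : Fin n →₀ ℕ) : ℕ := ∑ i, a i

/-- `I` is a monomial ideal: it is generated by monomials. -/
def IsMonomialIdeal {K : Type} [Field K] {n : ℕ} (I : Ideal (MPoly K n)) : Prop :=
  ∃ M : Set (Fin n →₀ ℕ),
    I = Ideal.span ((fun a => (monomial a (1 : K) : MPoly K n)) '' M)

/-- The exponents of the minimal monomial generating set `G(I)` of a monomial
ideal `I`: monomials in `I` no proper monomial divisor of which lies in `I`. -/
def minGens {K : Type} [Field K] {n : ℕ} (I : Ideal (MPoly K n)) : Set (Fin n →₀ ℕ) :=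
  { a | (monomial a (1 : K) : MPoly K n) ∈ I ∧
      ∀ b : Fin n →₀ ℕ, b ≤ a → b ≠ a → (monomial b (1 : K) : MPoly K n) ∉ I }

/-- The gradient ideal `∂(I) = (u/x_i : u ∈ G(I), i ∈ supp u)` of a monomial ideal. -/
def gradIdeal {K : Type} [Field K] {n : ℕ} (I : Ideal (MPoly K n)) : Ideal (MPoly K n) :=
  Ideal.span { q | ∃ a ∈ minGens I, ∃ i : Fin n, a i ≠ 0 ∧
      q = (monomial (a - Finsupp.single i 1) (1 : K) : MPoly K n) }

/-- `α(I)`: the minimal degree of a minimal monomial generator of `I`. -/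
def alphaDeg {K : Type} [Field K] {n : ℕ} (I : Ideal (MPoly K n)) : ℕ :=
  sInf (mdeg '' minGens I)

/-- A minimal graded free resolution of the ideal `I` as an `S`-module:
free modules `F i = S^{b i}` with generator degrees `dg i`, graded differentials
and augmentation, exactness, and minimality (entries of the differentials have
vanishing constant term). -/
structure MinFreeRes {K : Type} [Field K] {n : ℕ} (I : Ideal (MPoly K n)) where
  b : ℕ → ℕ
  dg : ∀ i : ℕ, Fin (b i) → ℕ
  diff : ∀ i : ℕ, (Fin (b (i + 1)) → MPoly K n) →ₗ[MPoly K n] (Fin (b i) → MPoly K n)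
  aug : (Fin (b 0) → MPoly K n) →ₗ[MPoly K n] MPoly K n
  aug_hom : ∀ k, (aug (Pi.single k 1)).IsHomogeneous (dg 0 k)
  aug_range : LinearMap.range aug = I
  diff_hom : ∀ i k l, ((diff i (Pi.single k 1)) l).IsHomogeneous (dg (i + 1) k - dg i l)
  minimal : ∀ i k l, constantCoeff ((diff i (Pi.single k 1)) l) = 0
  exact_zero : LinearMap.range (diff 0) = LinearMap.ker aug
  exact_succ : ∀ i, LinearMap.range (diff (i + 1)) = LinearMap.ker (diff i)

/-- The Castelnuovo–Mumford regularity read off from a minimal graded free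
resolution: `reg = max { j - i : β_{i,j} ≠ 0 }`. -/
def MinFreeRes.reg {K : Type} [Field K] {n : ℕ} {I : Ideal (MPoly K n)}
    (R : MinFreeRes I) : ℕ :=
  sSup { m | ∃ i k, R.dg i k - i = m }

/-- `I` has a `d`-linear resolution: its minimal free resolution has all
`i`-th syzygies generated in degree `d + i`. -/
def HasLinearRes {K : Type} [Field K] {n : ℕ} (I : Ideal (MPoly K n)) (d : ℕ) : Prop :=
  ∃ R : MinFreeRes I, ∀ i k, R.dg i k = d + i

/-- The monomial generator `u_i = x_{i+1} x_{i+2} ⋯ x_{i+d}` (0-indexed: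
`u_i = ∏_{j=0}^{d-1} x_{i+j}`) of the ideal in `K[x_1,…,x_{2d}]`. -/
def genMon (K : Type) [Field K] (d i : ℕ) : MPoly K (2 * d) :=
  monomial (∑ t : Fin (2 * d),
    if i ≤ (t : ℕ) ∧ (t : ℕ) < i + d then Finsupp.single t 1 else 0) (1 : K)

/-- The ideal `I = (x_i x_{i+1} ⋯ x_{i+d-1} : i = 1, …, d+1) ⊂ K[x_1,…,x_{2d}]`. -/
def runIdeal (K : Type) [Field K] (d : ℕ) : Ideal (MPoly K (2 * d)) :=
  Ideal.span { q | ∃ i : ℕ, i ≤ d ∧ q = genMon K d i }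

namespace Stmt8Aux

def eVec (d i : ℕ) : Fin (2*d) →₀ ℕ :=
  ∑ t : Fin (2*d), if i ≤ (t:ℕ) ∧ (t:ℕ) < i + d then Finsupp.single t 1 else 0

lemma eVec_apply (d i : ℕ) (t : Fin (2*d)) :
    eVec d i t = if i ≤ (t:ℕ) ∧ (t:ℕ) < i + d then 1 else 0 := by
  classical
  rw [eVec, Finsupp.finset_sum_apply]
  rw [Finset.sum_eq_single t]
  · split <;> simp [Finsupp.single_apply]
  · intro u _ hu
    split <;> simp [Finsupp.single_apply, hu]
  · simp

lemma genMon_eq (K : Type) [Field K] (d i : ℕ) :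
    genMon K d i = monomial (eVec d i) (1 : K) := rfl

lemma runIdeal_eq (K : Type) [Field K] (d : ℕ) :
    runIdeal K d = Ideal.span
      ((fun a => (monomial a (1 : K) : MPoly K (2*d))) ''
        {a | ∃ i ≤ d, a = eVec d i}) := by
  rw [runIdeal]
  congr 1
  ext q
  simp only [Set.mem_setOf_eq, Set.mem_image]
  constructor
  · rintro ⟨i, hi, rfl⟩
    exact ⟨eVec d i, ⟨i, hi, rfl⟩, (genMon_eq K d i).symm⟩
  · rintro ⟨a, ⟨i, hi, rfl⟩, rfl⟩
    exact ⟨i, hi, rfl⟩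

lemma mem_runIdeal_iff {K : Type} [Field K] {d : ℕ} {x : MPoly K (2*d)} :
    x ∈ runIdeal K d ↔ ∀ xi ∈ x.support, ∃ i ≤ d, eVec d i ≤ xi := by
  rw [runIdeal_eq, mem_ideal_span_monomial_image]
  constructor
  · intro h xi hxi
    obtain ⟨si, ⟨i, hi, rfl⟩, hle⟩ := h xi hxi
    exact ⟨i, hi, hle⟩
  · intro h xi hxi
    obtain ⟨i, hi, hle⟩ := h xi hxi
    exact ⟨eVec d i, ⟨i, hi, rfl⟩, hle⟩

lemma monomial_mem_runIdeal_iff {K : Type} [Field K] {d : ℕ} {b : Fin (2*d) →₀ ℕ} :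
    (monomial b (1 : K) : MPoly K (2*d)) ∈ runIdeal K d ↔ ∃ i ≤ d, eVec d i ≤ b := by
  rw [mem_runIdeal_iff]
  simp [support_monomial]

lemma eVec_le_eVec {d i j : ℕ} (hd : 1 ≤ d) (hi : i ≤ d) (hj : j ≤ d)
    (h : eVec d j ≤ eVec d i) : j = i := by
  have c1 : i ≤ j ∧ j < i + d := by
    by_contra hc
    have h1 := h ⟨j, by omega⟩
    rw [eVec_apply, eVec_apply] at h1
    simp only [Fin.val_mk] at h1
    rw [if_neg hc, if_pos ⟨le_refl j, by omega⟩] at h1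
    omega
  have c2 : i ≤ j + d - 1 ∧ j + d - 1 < i + d := by
    by_contra hc
    have h2 := h ⟨j + d - 1, by omega⟩
    rw [eVec_apply, eVec_apply] at h2
    simp only [Fin.val_mk] at h2
    rw [if_neg hc, if_pos ⟨by omega, by omega⟩] at h2
    omega
  omega

lemma eVec_mem_minGens {K : Type} [Field K] {d i : ℕ} (hd : 1 ≤ d) (hi : i ≤ d) :
    eVec d i ∈ minGens (runIdeal K d) := by
  constructor
  · exact monomial_mem_runIdeal_iff.mpr ⟨i, hi, le_refl _⟩
  · intro b hb hne hmem
    obtain ⟨j, hj, hle⟩ := monomial_mem_runIdeal_iff.mp hmem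
    have := eVec_le_eVec hd hi hj (hle.trans hb)
    subst this
    exact hne (le_antisymm hb hle)

lemma prod_X_eq {K : Type} [Field K] {n : ℕ} (F : Finset (Fin n)) :
    (∏ t ∈ F, (X t : MPoly K n)) =
      monomial (∑ t ∈ F, Finsupp.single t 1) (1 : K) := by
  classical
  induction F using Finset.induction with
  | empty => simp
  | insert _ _ h ih =>
    rw [Finset.prod_insert h, Finset.sum_insert h, ih, X, monomial_mul, one_mul]

lemma key {K : Type} [Field K] {d : ℕ} (hd : 1 ≤ d) (i : ℕ) (hi : i ≤ d)
    (s : Fin (2*d)) (hs : i ≤ (s:ℕ) ∧ (s:ℕ) < i + d)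
    (F : Finset (Fin (2*d)))
    (hF : ∀ t : Fin (2*d), i ≤ (t:ℕ) → (t:ℕ) < i + d → t ≠ s → t ∈ F) :
    (∏ t ∈ F, (X t : MPoly K (2*d))) ∈ gradIdeal (runIdeal K d) := by
  classical
  set f : Fin (2*d) →₀ ℕ := ∑ t ∈ F, Finsupp.single t 1 with hf
  have hfapp : ∀ t, f t = if t ∈ F then 1 else 0 := by
    intro t
    rw [hf, Finsupp.finset_sum_apply]
    by_cases htF : t ∈ F
    · rw [if_pos htF, Finset.sum_eq_single t]
      · simp
      · intro u _ hu
        simp [Finsupp.single_apply, hu]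
      · intro h
        exact absurd htF h
    · rw [if_neg htF, Finset.sum_eq_zero]
      intro u hu
      rw [Finsupp.single_apply, if_neg (by rintro rfl; exact htF hu)]
  have hle : eVec d i - Finsupp.single s 1 ≤ f := by
    intro t
    rw [Finsupp.tsub_apply, eVec_apply, hfapp, Finsupp.single_apply]
    rcases eq_or_ne t s with rfl | hne
    · rw [if_pos rfl]
      split_ifs <;> omega
    · have hst : ¬ (s = t) := fun h => hne h.symm
      rw [if_neg hst]
      by_cases hrun : i ≤ (t:ℕ) ∧ (t:ℕ) < i + d
      · rw [if_pos hrun, if_pos (hF t hrun.1 hrun.2 hne)]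
        omega
      · rw [if_neg hrun]
        simp
  obtain ⟨c, hc⟩ := le_iff_exists_add.mp hle
  have hgen : (monomial (eVec d i - Finsupp.single s 1) (1:K) : MPoly K (2*d)) ∈
      gradIdeal (runIdeal K d) := by
    apply Ideal.subset_span
    refine ⟨eVec d i, eVec_mem_minGens hd hi, s, ?_, rfl⟩
    rw [eVec_apply, if_pos hs]
    omega
  rw [prod_X_eq, ← hf, hc, ← one_mul (1:K), ← monomial_mul]
  exact Ideal.mul_mem_right _ _ hgen

lemma main_card {K : Type} [Field K] {d : ℕ} (hd : 2 ≤ d)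
    (F : Finset (Fin (2*d))) (a b : Fin (2*d)) (hab : (a:ℕ) < (b:ℕ))
    (hmemF : ∀ t, t ∈ F ↔ t ≠ a ∧ t ≠ b) :
    (∏ t ∈ F, (X t : MPoly K (2*d))) ∈ gradIdeal (runIdeal K d) := by
  have hb2 : (b:ℕ) < 2*d := b.isLt
  by_cases hb : (b:ℕ) < d
  · refine key (by omega) d (le_refl d) ⟨d, by omega⟩ ⟨by simp, by simp; omega⟩ F ?_
    intro t ht1 _ _
    rw [hmemF]
    constructor
    · intro h; subst h; omega
    · intro h; subst h; omega
  · by_cases ha : (a:ℕ) < d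
    · refine key (by omega) 0 (by omega) a ⟨by omega, by omega⟩ F ?_
      intro t _ ht2 hts
      rw [hmemF]
      refine ⟨hts, ?_⟩
      intro h; subst h; omega
    · refine key (by omega) 0 (by omega) ⟨0, by omega⟩ ⟨by simp, by simp; omega⟩ F ?_
      intro t _ ht2 _
      rw [hmemF]
      constructor
      · intro h; subst h; omega
      · intro h; subst h; omega

lemma part1 {K : Type} [Field K] {d : ℕ} (hd : 2 ≤ d)
    (F : Finset (Fin (2*d))) (hcard : F.card = 2*d - 2) :
    (∏ t ∈ F, (X t : MPoly K (2*d))) ∈ gradIdeal (runIdeal K d) := by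
  classical
  have hcompl : Fᶜ.card = 2 := by
    rw [Finset.card_compl, Fintype.card_fin, hcard]
    omega
  obtain ⟨a, b, hab, hFc⟩ := Finset.card_eq_two.mp hcompl
  have hmemF : ∀ t, t ∈ F ↔ t ≠ a ∧ t ≠ b := by
    intro t
    have h1 : t ∉ F ↔ t = a ∨ t = b := by
      rw [← Finset.mem_compl, hFc]
      simp
    constructor
    · intro ht
      exact ⟨fun h => (h1.mpr (Or.inl h)) ht, fun h => (h1.mpr (Or.inr h)) ht⟩
    · intro ⟨h2, h3⟩
      by_contra hF2
      rcases h1.mp hF2 with h | h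
      · exact h2 h
      · exact h3 h
  have habv : (a:ℕ) ≠ (b:ℕ) := fun h => hab (Fin.val_injective h)
  rcases lt_or_gt_of_ne habv with hlt | hlt
  · exact main_card hd F a b hlt hmemF
  · exact main_card hd F b a hlt (fun t => (hmemF t).trans and_comm)

end Stmt8Aux

/-- For `d ≥ 2` and `I = (x_i ⋯ x_{i+d-1} : i = 1,…,d+1)` in
`K[x_1,…,x_{2d}]`, every subset of `[2d]` of cardinality `2d - 2` is a nonface
of the Stanley–Reisner complex `Δ` of `∂(I)` (i.e. its product of variables
lies in `∂(I)`); in particular every face has cardinality `≤ 2d - 3`, so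

`dim Δ ≤ 2d - 4`. -/
theorem stmt8 {K : Type} [Field K] [CharZero K] (d : ℕ) (hd : 2 ≤ d) :
    (∀ F : Finset (Fin (2 * d)), F.card = 2 * d - 2 →
      (∏ t ∈ F, (X t : MPoly K (2 * d))) ∈ gradIdeal (runIdeal K d)) ∧
    (∀ F : Finset (Fin (2 * d)),
      (∏ t ∈ F, (X t : MPoly K (2 * d))) ∉ gradIdeal (runIdeal K d) →
      F.card ≤ 2 * d - 3) := by
  exact ⟨fun F hF => Stmt8Aux.part1 hd F hF, by
    intro F hnot
    by_contra h
    push_neg at h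
    obtain ⟨F', hsub, hcard'⟩ := Finset.exists_subset_card_eq (s := F) (n := 2*d - 2) (by omega)
    have hmem := Stmt8Aux.part1 (K := K) hd F' hcard'
    exact hnot (by
      rw [← Finset.prod_sdiff hsub]
      exact Ideal.mul_mem_left _ _ hmem)⟩
end
end

section
/- If I ⊂ S is a polymatroidal ideal, then its gradient ideal ∂(I) is also polymatroidal. -/
open MvPolynomial

noncomputable section

/-- A monomial ideal is polymatroidal if it is generated in a single degree and
the exponent vectors of its minimal generators satisfy the exchange property,
i.e. they form the set of bases of a discrete polymatroid. -/
def IsPolymatroidal {K : Type} [Field K] {n : ℕ} (I : Ideal (MPoly K n)) : Prop :=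
  IsMonomialIdeal I ∧
  (∃ d : ℕ, ∀ a ∈ minGens I, mdeg a = d) ∧
  (∀ u ∈ minGens I, ∀ v ∈ minGens I, ∀ i : Fin n, v i < u i →
    ∃ j : Fin n, u j < v j ∧
      (u - Finsupp.single i 1 + Finsupp.single j 1) ∈ minGens I)

/-! ### Auxiliary lemmas -/

lemma mdeg_mono {n : ℕ} {a b : Fin n →₀ ℕ} (h : a ≤ b) : mdeg a ≤ mdeg b :=
  Finset.sum_le_sum fun i _ => Finsupp.le_def.mp h i

lemma mdeg_tsub_add {n : ℕ} {a b : Fin n →₀ ℕ} (h : b ≤ a) :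
    mdeg (a - b) + mdeg b = mdeg a := by
  unfold mdeg
  rw [← Finset.sum_add_distrib]
  exact Finset.sum_congr rfl fun i _ => by
    rw [Finsupp.tsub_apply]
    exact tsub_add_cancel_of_le (Finsupp.le_def.mp h i)

lemma mdeg_add {n : ℕ} (a b : Fin n →₀ ℕ) : mdeg (a + b) = mdeg a + mdeg b := by
  unfold mdeg
  rw [← Finset.sum_add_distrib]
  exact Finset.sum_congr rfl fun i _ => Finsupp.add_apply a b i

lemma mdeg_single {n : ℕ} (i : Fin n) (c : ℕ) : mdeg (Finsupp.single i c) = c := by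
  classical
  unfold mdeg
  simp [Finsupp.single_apply]

lemma mdeg_lt {n : ℕ} {a b : Fin n →₀ ℕ} (hle : a ≤ b) (hne : a ≠ b) :
    mdeg a < mdeg b := by
  obtain ⟨i, hi⟩ : ∃ i, a i ≠ b i := by
    by_contra h
    push_neg at h
    exact hne (Finsupp.ext h)
  exact Finset.sum_lt_sum (fun k _ => Finsupp.le_def.mp hle k)
    ⟨i, Finset.mem_univ i, lt_of_le_of_ne (Finsupp.le_def.mp hle i) hi⟩

/-- If `z ≤ w` and `mdeg z + 1 = mdeg w`, then `z = w - e_r` for some `r` with `w r ≠ 0`. -/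
lemma eq_sub_single_of_le {n : ℕ} {z w : Fin n →₀ ℕ} (hle : z ≤ w)
    (hdeg : mdeg z + 1 = mdeg w) :
    ∃ r : Fin n, w r ≠ 0 ∧ z = w - Finsupp.single r 1 := by
  classical
  have hf : mdeg (w - z) = 1 := by
    have := mdeg_tsub_add hle
    omega
  have hfz : ∀ k, (w - z) k = w k - z k := fun k => Finsupp.tsub_apply w z k
  obtain ⟨r, hr⟩ : ∃ r, (w - z) r ≠ 0 := by
    by_contra h
    push_neg at h
    have : mdeg (w - z) = 0 := Finset.sum_eq_zero fun i _ => h i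
    omega
  have hsplit : (w - z) r + ∑ k ∈ Finset.univ.erase r, (w - z) k = mdeg (w - z) :=
    Finset.add_sum_erase Finset.univ _ (Finset.mem_univ r)
  have hr1 : (w - z) r = 1 := by omega
  have hrest : ∀ k, k ≠ r → (w - z) k = 0 := by
    intro k hk
    have h0 : ∑ k ∈ Finset.univ.erase r, (w - z) k = 0 := by omega
    exact Finset.sum_eq_zero_iff.mp h0 k (Finset.mem_erase.mpr ⟨hk, Finset.mem_univ k⟩)
  have hwr : w r ≠ 0 := by
    have := hfz r
    have := Finsupp.le_def.mp hle r
    omega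
  refine ⟨r, hwr, Finsupp.ext fun k => ?_⟩
  rw [Finsupp.tsub_apply, Finsupp.single_apply]
  have h1 := hfz k
  have h2 := Finsupp.le_def.mp hle k
  by_cases hk : r = k
  · subst hk
    rw [if_pos rfl]
    omega
  · have := hrest k (fun h => hk h.symm)
    rw [if_neg hk]
    omega

/-- Every monomial in an ideal is divisible by a minimal monomial generator. -/
lemma exists_minGens_le {K : Type} [Field K] {n : ℕ} (I : Ideal (MPoly K n)) :
    ∀ b : Fin n →₀ ℕ, (monomial b (1 : K) : MPoly K n) ∈ I →
      ∃ a ∈ minGens I, a ≤ b := by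
  have H : ∀ N : ℕ, ∀ b : Fin n →₀ ℕ, mdeg b ≤ N →
      (monomial b (1 : K) : MPoly K n) ∈ I → ∃ a ∈ minGens I, a ≤ b := by
    intro N
    induction N with
    | zero =>
      intro b hb hmem
      refine ⟨b, ⟨hmem, fun b' hle hne hmem' => ?_⟩, le_refl b⟩
      have := mdeg_lt hle hne
      omega
    | succ N ih =>
      intro b hb hmem
      by_cases h : ∃ b', b' ≤ b ∧ b' ≠ b ∧ (monomial b' (1 : K) : MPoly K n) ∈ I
      · obtain ⟨b', hle, hne, hmem'⟩ := h
        have hlt := mdeg_lt hle hne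
        obtain ⟨a, ha, hab⟩ := ih b' (by omega) hmem'
        exact ⟨a, ha, le_trans hab hle⟩
      · push_neg at h
        exact ⟨b, ⟨hmem, fun b' hle hne hmem' => (h b' hle hne) hmem'⟩, le_refl b⟩
  exact fun b => H (mdeg b) b (le_refl _)

/-- Divisibility direction: a monomial dominating a minimal generator lies in the ideal. -/
lemma monomial_mem_of_minGens_le {K : Type} [Field K] {n : ℕ} {I : Ideal (MPoly K n)}
    {a b : Fin n →₀ ℕ} (ha : a ∈ minGens I) (hab : a ≤ b) :
    (monomial b (1 : K) : MPoly K n) ∈ I := by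
  have heq : (monomial b (1 : K) : MPoly K n) =
      monomial (b - a) (1 : K) * monomial a (1 : K) := by
    rw [monomial_mul, one_mul, tsub_add_cancel_of_le hab]
  rw [heq]
  exact I.mul_mem_left _ ha.1

/-- The exponent vectors of the generators of the gradient ideal. -/
def gradExps {K : Type} [Field K] {n : ℕ} (I : Ideal (MPoly K n)) : Set (Fin n →₀ ℕ) :=
  {c | ∃ a ∈ minGens I, ∃ i : Fin n, a i ≠ 0 ∧ c = a - Finsupp.single i 1}

lemma gradIdeal_eq_span {K : Type} [Field K] {n : ℕ} (I : Ideal (MPoly K n)) :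
    gradIdeal I = Ideal.span ((fun c => (monomial c (1 : K) : MPoly K n)) '' gradExps I) := by
  unfold gradIdeal
  congr 1
  ext q
  constructor
  · rintro ⟨a, ha, i, hi, rfl⟩
    exact ⟨a - Finsupp.single i 1, ⟨a, ha, i, hi, rfl⟩, rfl⟩
  · rintro ⟨c, ⟨a, ha, i, hi, rfl⟩, rfl⟩
    exact ⟨a, ha, i, hi, rfl⟩

lemma monomial_mem_gradIdeal_iff {K : Type} [Field K] {n : ℕ} (I : Ideal (MPoly K n))
    (b : Fin n →₀ ℕ) :
    (monomial b (1 : K) : MPoly K n) ∈ gradIdeal I ↔ ∃ c ∈ gradExps I, c ≤ b := by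
  rw [gradIdeal_eq_span, mem_ideal_span_monomial_image]
  simp [support_monomial]

lemma mdeg_gradExps {K : Type} [Field K] {n d : ℕ} {I : Ideal (MPoly K n)}
    (hd : ∀ a ∈ minGens I, mdeg a = d) {c : Fin n →₀ ℕ} (hc : c ∈ gradExps I) :
    mdeg c + 1 = d := by
  obtain ⟨a, ha, i, hi, rfl⟩ := hc
  have hsingle : Finsupp.single i 1 ≤ a := by
    rw [Finsupp.le_def]
    intro k
    rw [Finsupp.single_apply]
    by_cases hk : i = k
    · subst hk; rw [if_pos rfl]; omega
    · rw [if_neg hk]; omega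
  have := mdeg_tsub_add hsingle
  rw [mdeg_single] at this
  rw [this]
  exact hd a ha

lemma minGens_gradIdeal {K : Type} [Field K] {n d : ℕ} (I : Ideal (MPoly K n))
    (hd : ∀ a ∈ minGens I, mdeg a = d) :
    minGens (gradIdeal I) = gradExps I := by
  ext b
  constructor
  · intro hb
    obtain ⟨c, hc, hcb⟩ := (monomial_mem_gradIdeal_iff I b).mp hb.1
    have hcmem : (monomial c (1 : K) : MPoly K n) ∈ gradIdeal I := by
      apply Ideal.subset_span
      obtain ⟨a, ha, i, hi, rfl⟩ := hc
      exact ⟨a, ha, i, hi, rfl⟩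
    by_cases hcb' : c = b
    · exact hcb' ▸ hc
    · exact absurd hcmem (hb.2 c hcb hcb')
  · intro hb
    refine ⟨?_, ?_⟩
    · apply Ideal.subset_span
      obtain ⟨a, ha, i, hi, rfl⟩ := hb
      exact ⟨a, ha, i, hi, rfl⟩
    · intro b' hle hne hmem
      obtain ⟨c', hc', hc'b⟩ := (monomial_mem_gradIdeal_iff I b').mp hmem
      have h1 : mdeg c' + 1 = d := mdeg_gradExps hd hc'
      have h2 : mdeg b + 1 = d := mdeg_gradExps hd hb
      have h3 := mdeg_mono hc'b
      have h4 := mdeg_lt hle hne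
      omega

/-- The symmetrized `ℓ¹` distance between two exponent vectors. -/
def Dd {n : ℕ} (a b : Fin n →₀ ℕ) : ℕ := ∑ k, ((a k - b k) + (b k - a k))

lemma Dd_comm {n : ℕ} (a b : Fin n →₀ ℕ) : Dd a b = Dd b a :=
  Finset.sum_congr rfl fun k _ => add_comm _ _

lemma swap_apply {n : ℕ} (u : Fin n →₀ ℕ) (i j k : Fin n) :
    ((u - Finsupp.single i 1 + Finsupp.single j 1 : Fin n →₀ ℕ)) k
      = u k - (if i = k then 1 else 0) + (if j = k then 1 else 0) := by
  classical
  rw [Finsupp.add_apply, Finsupp.tsub_apply, Finsupp.single_apply, Finsupp.single_apply]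

lemma Dd_lt {n : ℕ} {u v : Fin n →₀ ℕ} {i j : Fin n}
    (h1 : v i < u i) (h2 : u j < v j) :
    Dd (u - Finsupp.single i 1 + Finsupp.single j 1) v < Dd u v := by
  classical
  have hij : i ≠ j := by rintro rfl; omega
  apply Finset.sum_lt_sum
  · intro k _
    rw [swap_apply]
    by_cases hik : i = k
    · subst hik
      rw [if_pos rfl, if_neg (fun h => hij h.symm)]
      omega
    · rw [if_neg hik]
      by_cases hjk : j = k
      · subst hjk
        rw [if_pos rfl]
        omega
      · rw [if_neg hjk]
        omega
  · refine ⟨i, Finset.mem_univ i, ?_⟩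
    rw [swap_apply, if_pos rfl, if_neg (fun h => hij h.symm)]
    omega

/-- The augmentation property for the "polymatroid" below a base family `B`. -/
lemma augment {n d : ℕ} {B : Set (Fin n →₀ ℕ)}
    (hdeg : ∀ a ∈ B, mdeg a = d)
    (hex : ∀ u ∈ B, ∀ v ∈ B, ∀ i : Fin n, v i < u i →
      ∃ j : Fin n, u j < v j ∧ (u - Finsupp.single i 1 + Finsupp.single j 1) ∈ B)
    {x y u₀ v₀ : Fin n →₀ ℕ} (hu₀ : u₀ ∈ B) (hv₀ : v₀ ∈ B)
    (hx₀ : x ≤ u₀) (hy₀ : y ≤ v₀) (hxy : mdeg x < mdeg y) :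
    ∃ j : Fin n, x j < y j ∧ ∃ w ∈ B, x + Finsupp.single j 1 ≤ w := by
  classical
  set S : Set ℕ :=
    {N | ∃ u v, u ∈ B ∧ v ∈ B ∧ x ≤ u ∧ y ≤ v ∧ Dd u v = N} with hSdef
  have hS : S.Nonempty := ⟨Dd u₀ v₀, u₀, v₀, hu₀, hv₀, hx₀, hy₀, rfl⟩
  obtain ⟨u, v, hu, hv, hxu, hyv, hDuv⟩ := Nat.sInf_mem hS
  have hxu' := Finsupp.le_def.mp hxu
  have hyv' := Finsupp.le_def.mp hyv
  by_cases hA : ∃ j, x j < y j ∧ x j < u j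
  · obtain ⟨j, h1, h2⟩ := hA
    refine ⟨j, h1, u, hu, ?_⟩
    rw [Finsupp.le_def]
    intro k
    rw [Finsupp.add_apply, Finsupp.single_apply]
    have := hxu' k
    by_cases hk : j = k
    · subst hk; rw [if_pos rfl]; omega
    · rw [if_neg hk]; omega
  · push_neg at hA
    have hA' : ∀ j, x j < y j → u j = x j := fun j h => le_antisymm (hA j h) (hxu' j)
    have claim1 : ∀ i, v i < u i → x i = u i := by
      intro i hi
      by_contra hne
      have hxi : x i < u i := lt_of_le_of_ne (hxu' i) hne
      obtain ⟨j, hj, hmem⟩ := hex u hu v hv i hi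
      have hle : x ≤ u - Finsupp.single i 1 + Finsupp.single j 1 := by
        rw [Finsupp.le_def]
        intro k
        rw [swap_apply]
        have h0 := hxu' k
        by_cases hik : i = k
        · subst hik
          rw [if_pos rfl]
          by_cases hjk : j = i
          · rw [if_pos hjk]; omega
          · rw [if_neg hjk]; omega
        · rw [if_neg hik]
          by_cases hjk : j = k
          · rw [if_pos hjk]; omega
          · rw [if_neg hjk]; omega
      have hmem' : Dd (u - Finsupp.single i 1 + Finsupp.single j 1) v ∈ S :=
        ⟨_, v, hmem, hv, hle, hyv, rfl⟩
      have hle' := Nat.sInf_le hmem'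
      have hlt := Dd_lt hi hj
      omega
    have claim2 : ∀ m, u m < v m → y m = v m := by
      intro m hm
      by_contra hne
      have hym : y m < v m := lt_of_le_of_ne (hyv' m) hne
      obtain ⟨k, hk, hmem⟩ := hex v hv u hu m hm
      have hle : y ≤ v - Finsupp.single m 1 + Finsupp.single k 1 := by
        rw [Finsupp.le_def]
        intro l
        rw [swap_apply]
        have h0 := hyv' l
        by_cases hml : m = l
        · subst hml
          rw [if_pos rfl]
          by_cases hkl : k = m
          · rw [if_pos hkl]; omega
          · rw [if_neg hkl]; omega
        · rw [if_neg hml]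
          by_cases hkl : k = l
          · rw [if_pos hkl]; omega
          · rw [if_neg hkl]; omega
      have hmem' : Dd u (v - Finsupp.single m 1 + Finsupp.single k 1) ∈ S :=
        ⟨u, _, hu, hmem, hxu, hle, rfl⟩
      have hle' := Nat.sInf_le hmem'
      have hlt := Dd_lt hm hk
      rw [Dd_comm (v - Finsupp.single m 1 + Finsupp.single k 1) u] at hlt
      rw [Dd_comm v u] at hlt
      omega
    exfalso
    have key : ∀ k, y k + u k ≤ v k + x k := by
      intro k
      rcases lt_trichotomy (u k) (v k) with h | h | h
      · have h2 := claim2 k h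
        have h3 : x k < y k := by
          have := hxu' k
          omega
        have h4 := hA' k h3
        omega
      · by_cases h3 : x k < y k
        · have h4 := hA' k h3
          have := hyv' k
          omega
        · omega
      · have h2 := claim1 k h
        have := hyv' k
        omega
    have hsum : mdeg y + mdeg u ≤ mdeg v + mdeg x := by
      unfold mdeg
      rw [← Finset.sum_add_distrib, ← Finset.sum_add_distrib]
      exact Finset.sum_le_sum fun k _ => key k
    have h1 := hdeg u hu
    have h2 := hdeg v hv
    omega

/-- The gradient ideal of a polymatroidal ideal is polymatroidal. -/
theorem stmt10 {K : Type} [Field K] [CharZero K] {n : ℕ}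
    (I : Ideal (MPoly K n)) (hI : IsPolymatroidal I) :
    IsPolymatroidal (gradIdeal I) := by
  obtain ⟨hmon, ⟨d, hd⟩, hex⟩ := hI
  have hMG := minGens_gradIdeal I hd
  refine ⟨⟨gradExps I, gradIdeal_eq_span I⟩, ⟨d - 1, ?_⟩, ?_⟩
  · intro c hc
    rw [hMG] at hc
    have := mdeg_gradExps hd hc
    omega
  · intro u' hu' v' hv' i hlt
    rw [hMG] at hu' hv'
    -- degrees
    have hdu : mdeg u' + 1 = d := mdeg_gradExps hd hu'
    have hdv : mdeg v' + 1 = d := mdeg_gradExps hd hv'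
    obtain ⟨au, hau, p, hp, hu'eq⟩ := hu'
    -- x = u' - e_i, y = v'
    have hui : u' i ≠ 0 := by omega
    have hsingle : Finsupp.single i 1 ≤ u' := by
      rw [Finsupp.le_def]
      intro k
      rw [Finsupp.single_apply]
      by_cases hk : i = k
      · subst hk; rw [if_pos rfl]; omega
      · rw [if_neg hk]; omega
    have hdx : mdeg (u' - Finsupp.single i 1) + 1 = mdeg u' := by
      have := mdeg_tsub_add hsingle
      rw [mdeg_single] at this
      omega
    obtain ⟨av, hav, q, hq, hv'eq⟩ := hv'
    have hxau : u' - Finsupp.single i 1 ≤ au := by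
      refine le_trans tsub_le_self ?_
      rw [hu'eq]
      exact tsub_le_self
    have hyav : v' ≤ av := by rw [hv'eq]; exact tsub_le_self
    have hxy : mdeg (u' - Finsupp.single i 1) < mdeg v' := by omega
    obtain ⟨j, hj1, w, hw, hjw⟩ := augment hd hex hau hav hxau hyav hxy
    have hij : j ≠ i := by
      intro h
      subst h
      have : ((u' - Finsupp.single j 1 : Fin n →₀ ℕ)) j = u' j - 1 := by
        rw [Finsupp.tsub_apply, Finsupp.single_apply, if_pos rfl]
      omega
    have hxj : ((u' - Finsupp.single i 1 : Fin n →₀ ℕ)) j = u' j := by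
      rw [Finsupp.tsub_apply, Finsupp.single_apply, if_neg (fun h => hij h.symm)]
      omega
    refine ⟨j, by omega, ?_⟩
    rw [hMG]
    have hdz : mdeg (u' - Finsupp.single i 1 + Finsupp.single j 1) + 1 = mdeg w := by
      rw [mdeg_add, mdeg_single, hd w hw]
      omega
    obtain ⟨r, hr, hzeq⟩ := eq_sub_single_of_le hjw hdz
    exact ⟨w, hw, r, hr, hzeq⟩
end
end

section
/- Let I ⊂ S be a monomial ideal and i ∉ supp(I). Then for all ℓ ≥ 1, ∂^ℓ(x_i I) = x_i ∂^ℓ(I) + ∂^{ℓ-1}(I). -/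
open MvPolynomial

noncomputable section

namespace Stmt14Aux

variable {K : Type} [Field K] {n : ℕ}

/-- Span of the monomials with exponents in `S`. -/
def sp (K : Type) [Field K] {n : ℕ} (S : Set (Fin n →₀ ℕ)) : Ideal (MPoly K n) :=
  Ideal.span ((fun a => (monomial a (1 : K) : MPoly K n)) '' S)

def Tset {n : ℕ} (i : Fin n) (S : Set (Fin n →₀ ℕ)) : Set (Fin n →₀ ℕ) :=
  (fun a => Finsupp.single i 1 + a) '' S

def Dset {n : ℕ} (S : Set (Fin n →₀ ℕ)) : Set (Fin n →₀ ℕ) :=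
  { c | ∃ a ∈ S, ∃ k : Fin n, a k ≠ 0 ∧ c = a - Finsupp.single k 1 }

lemma monomial_mem_sp {S : Set (Fin n →₀ ℕ)} {b : Fin n →₀ ℕ} :
    (monomial b (1 : K) : MPoly K n) ∈ sp K S ↔ ∃ a ∈ S, a ≤ b := by
  rw [sp, mem_ideal_span_monomial_image]
  simp [support_monomial]
lemma sp_le_sp {S S' : Set (Fin n →₀ ℕ)} (h : ∀ a ∈ S, ∃ a' ∈ S', a' ≤ a) :
    sp K S ≤ sp K S' := by
  rw [sp, Ideal.span_le]
  rintro q ⟨a, ha, rfl⟩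
  exact monomial_mem_sp.2 (h a ha)
lemma sp_union {S S' : Set (Fin n →₀ ℕ)} : sp K (S ∪ S') = sp K S + sp K S' := by
  rw [sp, sp, sp, Set.image_union, Ideal.span_union]
  rfl

lemma sp_empty : sp K (∅ : Set (Fin n →₀ ℕ)) = ⊥ := by
  simp [sp]

lemma mem_minGens_sp {S : Set (Fin n →₀ ℕ)} {a : Fin n →₀ ℕ} :
    a ∈ minGens (sp K S) ↔ a ∈ S ∧ ∀ b ∈ S, b ≤ a → b = a := by
  constructor
  · rintro ⟨hmem, hmin⟩
    obtain ⟨s, hs, hsa⟩ := monomial_mem_sp.1 hmem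
    have hsea : s = a := by
      by_contra hne
      exact hmin s hsa hne (monomial_mem_sp.2 ⟨s, hs, le_rfl⟩)
    subst hsea
    refine ⟨hs, fun b hb hba => ?_⟩
    by_contra hne
    exact hmin b hba hne (monomial_mem_sp.2 ⟨b, hb, le_rfl⟩)
  · rintro ⟨haS, hmin⟩
    refine ⟨monomial_mem_sp.2 ⟨a, haS, le_rfl⟩, fun b hba hne hb => ?_⟩
    obtain ⟨s, hs, hsb⟩ := monomial_mem_sp.1 hb
    have : s = a := hmin s hs (hsb.trans hba)
    subst this
    exact hne (le_antisymm hba hsb)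
lemma exists_minGen {S : Set (Fin n →₀ ℕ)} :
    ∀ b : Fin n →₀ ℕ, (monomial b (1 : K) : MPoly K n) ∈ sp K S →
      ∃ m ∈ minGens (sp K S), m ≤ b := by
  have H : ∀ d : ℕ, ∀ b : Fin n →₀ ℕ, (∑ j, b j) = d →
      (monomial b (1 : K) : MPoly K n) ∈ sp K S → ∃ m ∈ minGens (sp K S), m ≤ b := by
    intro d
    induction d using Nat.strong_induction_on with
    | _ d ih =>
    intro b hd hb
    by_cases hmin : ∀ c : Fin n →₀ ℕ, c ≤ b → c ≠ b → (monomial c (1 : K) : MPoly K n) ∉ sp K S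
    · exact ⟨b, ⟨hb, hmin⟩, le_rfl⟩
    · push_neg at hmin
      obtain ⟨c, hcb, hne, hc⟩ := hmin
      have hlt : (∑ j, c j) < ∑ j, b j := by
        obtain ⟨t, ht⟩ : ∃ t, c t ≠ b t := by
          by_contra h; push_neg at h; exact hne (Finsupp.ext h)
        exact Finset.sum_lt_sum (fun j _ => hcb j) ⟨t, Finset.mem_univ t, lt_of_le_of_ne (hcb t) ht⟩
      obtain ⟨m, hm, hmc⟩ := ih _ (hd ▸ hlt) c rfl hc
      exact ⟨m, hm, hmc.trans hcb⟩
  intro b hb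
  exact H _ b rfl hb

lemma sp_minGens {S : Set (Fin n →₀ ℕ)} : sp K (minGens (sp K S)) = sp K S := by
  apply le_antisymm
  · exact sp_le_sp fun a ha => ⟨a, (mem_minGens_sp.1 ha).1, le_rfl⟩
  · exact sp_le_sp fun a ha => by
      obtain ⟨m, hm, hma⟩ := exists_minGen (K := K) a (monomial_mem_sp.2 ⟨a, ha, le_rfl⟩)
      exact ⟨m, hm, hma⟩
lemma gradIdeal_eq (I : Ideal (MPoly K n)) : gradIdeal I = sp K (Dset (minGens I)) := by
  rw [gradIdeal, sp]
  congr 1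
  ext q
  constructor
  · rintro ⟨a, ha, k, hk, rfl⟩
    exact ⟨a - Finsupp.single k 1, ⟨a, ha, k, hk, rfl⟩, rfl⟩
  · rintro ⟨c, ⟨a, ha, k, hk, rfl⟩, rfl⟩
    exact ⟨a, ha, k, hk, rfl⟩

lemma Dset_union {S S' : Set (Fin n →₀ ℕ)} : Dset (S ∪ S') = Dset S ∪ Dset S' := by
  ext c
  constructor
  · rintro ⟨a, (h | h), k, hk, rfl⟩
    · exact Or.inl ⟨a, h, k, hk, rfl⟩
    · exact Or.inr ⟨a, h, k, hk, rfl⟩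
  · rintro (⟨a, h, k, hk, rfl⟩ | ⟨a, h, k, hk, rfl⟩)
    · exact ⟨a, Or.inl h, k, hk, rfl⟩
    · exact ⟨a, Or.inr h, k, hk, rfl⟩

lemma Dset_empty : Dset (∅ : Set (Fin n →₀ ℕ)) = ∅ := by
  ext c; simp [Dset]

lemma gradIdeal_sp {S : Set (Fin n →₀ ℕ)} (h0 : (0 : Fin n →₀ ℕ) ∉ S) :
    gradIdeal (sp K S) = sp K (Dset S) := by
  rw [gradIdeal_eq]
  apply le_antisymm
  · apply sp_le_sp
    rintro c ⟨a, ha, k, hk, rfl⟩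
    exact ⟨a - Finsupp.single k 1, ⟨a, (mem_minGens_sp.1 ha).1, k, hk, rfl⟩, le_rfl⟩
  · apply sp_le_sp
    rintro c ⟨a, ha, k, hk, rfl⟩
    obtain ⟨m, hm, hma⟩ := exists_minGen (K := K) a (monomial_mem_sp.2 ⟨a, ha, le_rfl⟩)
    have hm0 : m ≠ 0 := by
      rintro rfl
      exact h0 ((mem_minGens_sp.1 hm).1)
    by_cases hmk : m k ≠ 0
    · exact ⟨m - Finsupp.single k 1, ⟨m, hm, k, hmk, rfl⟩, tsub_le_tsub_right hma _⟩
    · push_neg at hmk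
      obtain ⟨j, hj⟩ : ∃ j, m j ≠ 0 := by
        by_contra h; push_neg at h; exact hm0 (Finsupp.ext h)
      refine ⟨m - Finsupp.single j 1, ⟨m, hm, j, hj, rfl⟩, ?_⟩
      refine (tsub_le_self).trans ?_
      intro t
      rw [Finsupp.tsub_apply]
      rcases eq_or_ne t k with rfl | htk
      · simp [hmk]
      · simpa [Finsupp.single_eq_of_ne' (Ne.symm htk)] using hma t
lemma X_mul_sp {S : Set (Fin n →₀ ℕ)} (i : Fin n) :
    Ideal.span {(X i : MPoly K n)} * sp K S = sp K (Tset i S) := by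
  apply le_antisymm
  · rw [Ideal.mul_le]
    intro r hr s hs
    rw [Ideal.mem_span_singleton] at hr
    obtain ⟨c, rfl⟩ := hr
    rw [mul_comm (X i) c, mul_assoc]
    have : ∀ s ∈ sp K S, (X i : MPoly K n) * s ∈ sp K (Tset i S) := by
      intro s hs
      refine Submodule.span_induction ?_ ?_ ?_ ?_ hs
      · rintro q ⟨a, ha, rfl⟩
        have : (X i : MPoly K n) * monomial a 1 = monomial (Finsupp.single i 1 + a) 1 := by
          rw [X, monomial_mul, one_mul]
        rw [this]
        exact Ideal.subset_span ⟨Finsupp.single i 1 + a, ⟨a, ha, rfl⟩, rfl⟩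
      · simp
      · intro x y _ _ hx hy; rw [mul_add]; exact Ideal.add_mem _ hx hy
      · intro c x _ hx
        rw [smul_eq_mul, mul_left_comm]
        exact Ideal.mul_mem_left _ _ hx
    exact Ideal.mul_mem_left _ c (this s hs)
  · rw [sp, Ideal.span_le]
    rintro q ⟨c, ⟨a, ha, rfl⟩, rfl⟩
    have : (monomial (Finsupp.single i 1 + a) (1 : K) : MPoly K n)
        = X i * monomial a 1 := by rw [X, monomial_mul, one_mul]
    show (monomial (Finsupp.single i 1 + a) (1 : K) : MPoly K n) ∈ _
    rw [this]
    exact Ideal.mul_mem_mul (Ideal.subset_span rfl) (Ideal.subset_span ⟨a, ha, rfl⟩)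
lemma Dset_shift {S : Set (Fin n →₀ ℕ)} {i : Fin n} (hS : ∀ a ∈ S, a i = 0) :
    Dset (Tset i S) = Tset i (Dset S) ∪ S := by
  ext c
  constructor
  · rintro ⟨b, ⟨a, ha, rfl⟩, k, hk, rfl⟩
    rcases eq_or_ne k i with rfl | hki
    · right
      rwa [add_tsub_cancel_left]
    · left
      have hak : a k ≠ 0 := by
        rwa [Finsupp.add_apply, Finsupp.single_eq_of_ne' (Ne.symm hki), zero_add] at hk
      refine ⟨a - Finsupp.single k 1, ⟨a, ha, k, hak, rfl⟩, ?_⟩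
      show Finsupp.single i 1 + (a - Finsupp.single k 1) = Finsupp.single i 1 + a - Finsupp.single k 1
      rw [Finsupp.add_sub_single_one hak]
  · rintro (⟨b, ⟨a, ha, k, hak, rfl⟩, rfl⟩ | hc)
    · refine ⟨Finsupp.single i 1 + a, ⟨a, ha, rfl⟩, k, ?_, ?_⟩
      · rw [Finsupp.add_apply]
        exact fun h => hak (by omega)
      · show Finsupp.single i 1 + (a - Finsupp.single k 1) = Finsupp.single i 1 + a - Finsupp.single k 1
        rw [Finsupp.add_sub_single_one hak]
    · refine ⟨Finsupp.single i 1 + c, ⟨c, hc, rfl⟩, i, ?_, ?_⟩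
      · simp
      · rw [add_tsub_cancel_left]
lemma minGens_bot : minGens (⊥ : Ideal (MPoly K n)) = ∅ := by
  ext a
  simp only [Set.mem_empty_iff_false, iff_false, minGens, Set.mem_setOf_eq]
  rintro ⟨h, -⟩
  rw [Ideal.mem_bot] at h
  exact one_ne_zero ((monomial_eq_zero).1 h)

lemma minGens_top : minGens (⊤ : Ideal (MPoly K n)) = {0} := by
  ext a
  simp only [Set.mem_singleton_iff, minGens, Set.mem_setOf_eq, Submodule.mem_top, true_and]
  constructor
  · intro h
    by_contra h0
    exact h 0 zero_le (Ne.symm h0) trivial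
  · rintro rfl b hb hne
    exact absurd (le_antisymm hb zero_le) hne

lemma Dset_singleton_zero : Dset ({0} : Set (Fin n →₀ ℕ)) = ∅ := by
  ext c
  simp [Dset]

lemma gradIdeal_bot : gradIdeal (⊥ : Ideal (MPoly K n)) (K := K) = ⊥ := by
  rw [gradIdeal_eq, minGens_bot]
  have : Dset (∅ : Set (Fin n →₀ ℕ)) = ∅ := by ext c; simp [Dset]
  rw [this, sp_empty]

lemma gradIdeal_top : gradIdeal (⊤ : Ideal (MPoly K n)) (K := K) = ⊥ := by
  rw [gradIdeal_eq, minGens_top, Dset_singleton_zero, sp_empty]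

lemma zero_notMem_Tset {S : Set (Fin n →₀ ℕ)} {i : Fin n} : (0 : Fin n →₀ ℕ) ∉ Tset i S := by
  rintro ⟨a, -, ha⟩
  have := congrArg (fun f : Fin n →₀ ℕ => f i) ha
  simp at this
lemma grad_key {i : Fin n} {J J' : Ideal (MPoly K n)}
    (hJ : J = sp K (minGens J)) (hJ' : J' = sp K (minGens J'))
    (hJi : ∀ a ∈ minGens J, a i = 0)
    (h0 : (0 : Fin n →₀ ℕ) ∉ minGens J') :
    gradIdeal (Ideal.span {(X i : MPoly K n)} * J + J')
      = Ideal.span {(X i : MPoly K n)} * gradIdeal J + J + gradIdeal J' := by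
  have h1 : Ideal.span {(X i : MPoly K n)} * J + J' = sp K (Tset i (minGens J) ∪ minGens J') := by
    rw [sp_union, ← X_mul_sp, ← hJ, ← hJ']
  have h0' : (0 : Fin n →₀ ℕ) ∉ Tset i (minGens J) ∪ minGens J' := by
    rintro (h | h)
    · exact zero_notMem_Tset h
    · exact h0 h
  rw [h1, gradIdeal_sp h0', Dset_union, Dset_shift hJi, sp_union, sp_union,
    ← X_mul_sp, ← gradIdeal_eq, ← gradIdeal_eq, ← hJ]

/-- properties of iterates: monomial-ness and i-freeness. -/
lemma iter_props {I : Ideal (MPoly K n)} {i : Fin n}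
    (hI : I = sp K (minGens I)) (hi : ∀ a ∈ minGens I, a i = 0) :
    ∀ l : ℕ, ((gradIdeal (K := K) (n := n))^[l] I = sp K (minGens ((gradIdeal (K := K))^[l] I)))
      ∧ ∀ a ∈ minGens ((gradIdeal (K := K) (n := n))^[l] I), a i = 0 := by
  intro l
  induction l with
  | zero => exact ⟨hI, hi⟩
  | succ l ih =>
    obtain ⟨h1, h2⟩ := ih
    rw [Function.iterate_succ_apply']
    have hgr : gradIdeal ((gradIdeal (K := K) (n := n))^[l] I)
        = sp K (Dset (minGens ((gradIdeal (K := K))^[l] I))) := gradIdeal_eq _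
    constructor
    · rw [hgr, sp_minGens]
    · intro a ha
      rw [hgr] at ha
      obtain ⟨b, hb, k, hk, rfl⟩ := (mem_minGens_sp.1 ha).1
      rw [Finsupp.tsub_apply]
      have := h2 b hb
      omega

end Stmt14Aux

open Stmt14Aux in
/-- For a monomial ideal `I` and a variable `x_i` with
`i ∉ supp(I)`, for all `ℓ ≥ 1`:
`∂^ℓ(x_i I) = x_i ∂^ℓ(I) + ∂^{ℓ-1}(I)` (stated with `ℓ = l + 1`). -/
theorem stmt14 {K : Type} [Field K] [CharZero K] {n : ℕ}
    (I : Ideal (MPoly K n)) (hI : IsMonomialIdeal I)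
    (i : Fin n) (hi : ∀ a ∈ minGens I, a i = 0) :
    ∀ l : ℕ,
      (gradIdeal (K := K) (n := n))^[l + 1] (Ideal.span {(X i : MPoly K n)} * I)
        = Ideal.span {(X i : MPoly K n)} * (gradIdeal (K := K) (n := n))^[l + 1] I
          + (gradIdeal (K := K) (n := n))^[l] I := by
  have hImin : I = sp K (minGens I) := by
    obtain ⟨M, hM⟩ := hI
    rw [hM]
    exact (sp_minGens (S := M)).symm
  intro l
  induction l with
  | zero =>
    rw [Function.iterate_one, Function.iterate_zero_apply]
    have hkey := grad_key (i := i) (J := I) (J' := (⊥ : Ideal (MPoly K n))) hImin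
      (by rw [minGens_bot, sp_empty]) hi (by rw [minGens_bot]; exact Set.notMem_empty 0)
    rw [gradIdeal_bot] at hkey
    simpa using hkey
  | succ l ih =>
    rw [Function.iterate_succ_apply' _ (l + 1), ih]
    by_cases hT : (gradIdeal (K := K) (n := n))^[l] I = ⊤
    · have h1 : (gradIdeal (K := K) (n := n))^[l + 1] I = ⊥ := by
        rw [Function.iterate_succ_apply', hT, gradIdeal_top]
      have h2 : (gradIdeal (K := K) (n := n))^[l + 1 + 1] I = ⊥ := by
        rw [Function.iterate_succ_apply', h1, gradIdeal_bot]
      rw [hT, h1, h2]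
      have hb : Ideal.span {(X i : MPoly K n)} * (⊥ : Ideal (MPoly K n)) = ⊥ :=
        Ideal.mul_bot _
      rw [hb]
      simp only [Submodule.add_eq_sup, bot_sup_eq, sup_bot_eq, sup_top_eq, bot_le, top_le_iff]
      rw [gradIdeal_top]
    · obtain ⟨hm1, hf1⟩ := iter_props hImin hi (l + 1)
      obtain ⟨hm0, _⟩ := iter_props hImin hi l
      have h0 : (0 : Fin n →₀ ℕ) ∉ minGens ((gradIdeal (K := K) (n := n))^[l] I) := by
        intro h
        apply hT
        rw [Ideal.eq_top_iff_one]
        have h1 := h.1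
        rwa [monomial_zero', C_1] at h1
      rw [grad_key hm1 hm0 hf1 h0,
        ← Function.iterate_succ_apply' (gradIdeal (K := K) (n := n)) (l + 1) I,
        ← Function.iterate_succ_apply' (gradIdeal (K := K) (n := n)) l I, add_assoc]
      congr 1
      simp [Submodule.add_eq_sup]
end
end

section
/- Let n ≥ 2d and a = C(n,d) - 2d + 1, where d ≥ 3. Then the (d-1)-st Kruskal–Katona shadow bound satisfies a^{(d-1)} = C(n,d-1) - 1 if 2d ≤ n ≤ 3d-2, and a^{(d-1)} = C(n,d-1) if n ≥ 3d-1; in particular a^{(d-1)} ≥ C(n,d-1) - 2(d-1) + 1. -/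
/-- `L = [a_d, a_{d-1}, …, a_t]` is the `d`-th binomial (Macaulay) expansion of
`a`: `a = C(a_d,d) + C(a_{d-1},d-1) + ⋯ + C(a_t,t)` with
`a_d > a_{d-1} > ⋯ > a_t ≥ t ≥ 1`. -/
def IsMacaulayRep (d a : ℕ) (L : List ℕ) : Prop :=
  L ≠ [] ∧ L.length ≤ d ∧ List.Chain' (· > ·) L ∧
  (∀ j : Fin L.length, d - (j : ℕ) ≤ L.get j) ∧
  a = ∑ j : Fin L.length, Nat.choose (L.get j) (d - (j : ℕ))

/-- The Kruskal–Katona shadow bound `a^{(d-1)}` computed from a `d`-th binomial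
expansion `L` of `a`: `a^{(d-1)} = C(a_d,d-1) + C(a_{d-1},d-2) + ⋯ + C(a_t,t-1)`. -/
def shadowBound (d : ℕ) (L : List ℕ) : ℕ :=
  ∑ j : Fin L.length, Nat.choose (L.get j) (d - 1 - (j : ℕ))

/-- The decreasing list `[n, n-1, …, n-c+1]`. -/
def dec : ℕ → ℕ → List ℕ
  | _, 0 => []
  | n, c+1 => n :: dec (n-1) c

/-- Recursive evaluation of a binomial expansion:
`sumRep k [x₁, x₂, …] = C(x₁,k) + C(x₂,k-1) + ⋯`. -/
def sumRep : ℕ → List ℕ → ℕ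
  | _, [] => 0
  | k, x :: T => Nat.choose x k + sumRep (k-1) T

lemma dec_length (n c : ℕ) : (dec n c).length = c := by
  induction c generalizing n with
  | zero => rfl
  | succ c ih => simp [dec, ih]

lemma dec_getElem (n c j : ℕ) (h : j < (dec n c).length) : (dec n c)[j] = n - j := by
  induction c generalizing n j with
  | zero => simp [dec_length] at h
  | succ c ih =>
    cases j with
    | zero => simp [dec]
    | succ j =>
      have : (dec n (c+1))[j+1] = (dec (n-1) c)[j]'(by simp [dec_length] at h ⊢; omega) := by
        simp [dec]
      rw [this, ih]
      omega

lemma dec_head? (n c : ℕ) (h : 0 < c) : (dec n c).head? = some n := by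
  cases c with
  | zero => omega
  | succ c => simp [dec]

lemma dec_getLast? (n c : ℕ) (h : 0 < c) : (dec n c).getLast? = some (n + 1 - c) := by
  induction c generalizing n with
  | zero => omega
  | succ c ih =>
    cases c with
    | zero => simp [dec]
    | succ c =>
      have h1 : dec n (c+1+1) = n :: dec (n-1) (c+1) := rfl
      have h2 : dec (n-1) (c+1) = (n-1) :: dec (n-1-1) c := rfl
      rw [h1, h2, List.getLast?_cons_cons, ← h2, ih (n-1) (by omega)]
      congr 1
      omega

lemma dec_chain (n c : ℕ) (h : c ≤ n + 1) : (dec n c).Chain' (· > ·) := by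
  induction c generalizing n with
  | zero => exact List.isChain_nil
  | succ c ih =>
    rw [show dec n (c+1) = n :: dec (n-1) c from rfl, List.Chain', List.isChain_cons]
    refine ⟨?_, ih (n-1) (by omega)⟩
    intro y hy
    cases c with
    | zero => simp [dec] at hy
    | succ c =>
      rw [dec_head? (n-1) (c+1) (by omega)] at hy
      simp at hy
      omega

lemma sumRep_append (A B : List ℕ) (k : ℕ) :
    sumRep k (A ++ B) = sumRep k A + sumRep (k - A.length) B := by
  induction A generalizing k with
  | nil => simp [sumRep]
  | cons x T ih =>
    show Nat.choose x k + sumRep (k-1) (T ++ B) = _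
    rw [ih (k-1)]
    simp only [List.length_cons, sumRep]
    have : k - (T.length + 1) = k - 1 - T.length := by omega
    rw [this, add_assoc]

/-- Telescoping (hockey stick) identity for maximal decreasing expansions. -/
lemma hs (c k m : ℕ) (h1 : c ≤ k) (h2 : k ≤ m + 1) :
    Nat.choose (m + 1 - c) (k - c) + sumRep k (dec m c) = Nat.choose (m+1) k := by
  induction c generalizing m k with
  | zero => simp [dec, sumRep]
  | succ c ih =>
    obtain ⟨k', rfl⟩ : ∃ k', k = k' + 1 := ⟨k - 1, by omega⟩
    rcases m with _ | m'
    · have hk : k' = 0 := by omega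
      have hc : c = 0 := by omega
      subst hk hc
      simp [dec, sumRep]
    · have hih := ih k' m' (by omega) (by omega)
      rw [show dec (m'+1) (c+1) = (m'+1) :: dec m' c from rfl]
      simp only [sumRep]
      have e1 : m' + 1 + 1 - (c+1) = m' + 1 - c := by omega
      have e2 : k' + 1 - (c+1) = k' - c := by omega
      have e3 : k' + 1 - 1 = k' := by omega
      rw [e1, e2, e3, ← add_assoc,
        add_comm (Nat.choose (m'+1-c) (k'-c)) (Nat.choose (m'+1) (k'+1)),
        add_assoc, hih, Nat.choose_succ_succ (m'+1) k']
      ring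

lemma sum_eq_sumRep (L : List ℕ) (k : ℕ) :
    (∑ j : Fin L.length, Nat.choose (L.get j) (k - (j : ℕ))) = sumRep k L := by
  induction L generalizing k with
  | nil => simp [sumRep]
  | cons x T ih =>
    show (∑ j : Fin (T.length + 1), Nat.choose ((x :: T).get j) (k - (j : ℕ))) = _
    rw [Fin.sum_univ_succ]
    simp only [List.get_eq_getElem, Fin.val_succ, Fin.val_zero, List.getElem_cons_zero,
      List.getElem_cons_succ, Nat.sub_zero, sumRep]
    congr 1
    rw [← ih (k-1)]
    apply Finset.sum_congr rfl
    intro j _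
    rw [List.get_eq_getElem]
    congr 1
    omega

lemma pb_tail {x : ℕ} {T : List ℕ} {k : ℕ}
    (hpb : ∀ j : Fin (x :: T).length, k - (j : ℕ) ≤ (x :: T).get j) :
    ∀ j : Fin T.length, k - 1 - (j : ℕ) ≤ T.get j := by
  intro j
  have := hpb j.succ
  simp [Fin.val_succ] at this
  simp [List.get_eq_getElem]
  omega

/-- Strict upper bound for admissible expansions dominated by `m`. -/
lemma slb (T : List ℕ) (k m : ℕ) (hkm : k ≤ m) (hch : T.Chain' (· > ·))
    (hlen : T.length ≤ k) (hpb : ∀ j : Fin T.length, k - (j : ℕ) ≤ T.get j)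
    (hhd : ∀ y ∈ T.head?, y < m) : sumRep k T < Nat.choose m k := by
  induction T generalizing k m with
  | nil => simpa [sumRep] using Nat.choose_pos hkm
  | cons x T ih =>
    have hx : x < m := hhd x rfl
    have hl : T.length + 1 ≤ k := by simpa using hlen
    obtain ⟨m', rfl⟩ : ∃ m', m = m' + 1 := ⟨m - 1, by omega⟩
    obtain ⟨k', rfl⟩ : ∃ k', k = k' + 1 := ⟨k - 1, by omega⟩
    have hrec : sumRep k' T < Nat.choose m' k' := by
      apply ih k' m' (by omega) hch.tail (by omega) (by simpa using pb_tail hpb)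
      intro y hy
      have hyx : y < x := by
        cases T with
        | nil => simp at hy
        | cons z T' =>
          simp at hy
          subst hy
          exact (List.isChain_cons_cons.mp hch).1
      omega
    have hA : Nat.choose x (k'+1) ≤ Nat.choose m' (k'+1) :=
      Nat.choose_le_choose _ (by omega)
    calc sumRep (k'+1) (x :: T) = Nat.choose x (k'+1) + sumRep k' T := by simp [sumRep]
    _ < Nat.choose m' (k'+1) + Nat.choose m' k' := by omega
    _ = Nat.choose (m'+1) (k'+1) := by rw [Nat.choose_succ_succ]; ring

/-- Uniqueness of the Macaulay expansion. -/
lemma uniq : ∀ (T T' : List ℕ) (k : ℕ), T.Chain' (· > ·) → T'.Chain' (· > ·) →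
    T.length ≤ k → T'.length ≤ k →
    (∀ j : Fin T.length, k - (j : ℕ) ≤ T.get j) →
    (∀ j : Fin T'.length, k - (j : ℕ) ≤ T'.get j) →
    sumRep k T = sumRep k T' → T = T' := by
  intro T
  induction T with
  | nil =>
    intro T' k _ _ _ _ _ hpb' hsum
    cases T' with
    | nil => rfl
    | cons y r =>
      exfalso
      have hy : k ≤ y := by simpa using hpb' ⟨0, by simp⟩
      have : 0 < Nat.choose y k := Nat.choose_pos hy
      simp [sumRep] at hsum
      omega
  | cons x T ih =>
    intro T' k hch hch' hlen hlen' hpb hpb' hsum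
    cases T' with
    | nil =>
      exfalso
      have hx : k ≤ x := by simpa using hpb ⟨0, by simp⟩
      have : 0 < Nat.choose x k := Nat.choose_pos hx
      simp [sumRep] at hsum
      omega
    | cons y r =>
      have hx : k ≤ x := by simpa using hpb ⟨0, by simp⟩
      have hy : k ≤ y := by simpa using hpb' ⟨0, by simp⟩
      have key : ∀ (a b : ℕ) (S S' : List ℕ), a < b → k ≤ a → (a :: S).Chain' (· > ·) →
          (a :: S).length ≤ k → (∀ j : Fin (a :: S).length, k - (j:ℕ) ≤ (a :: S).get j) →
          sumRep k (a :: S) < sumRep k (b :: S') := by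
        intro a b S S' hab hka hchS hlenS hpbS
        have h1 : sumRep k (a :: S) < Nat.choose (a+1) k := by
          apply slb _ _ _ (by omega) hchS hlenS hpbS
          intro z hz
          simp at hz
          omega
        have h2 : Nat.choose (a+1) k ≤ Nat.choose b k := Nat.choose_le_choose _ (by omega)
        have h3 : Nat.choose b k ≤ sumRep k (b :: S') := by simp [sumRep]
        omega
      have hxy : x = y := by
        rcases lt_trichotomy x y with h | h | h
        · exact absurd hsum (Nat.ne_of_lt (key x y T r h hx hch hlen hpb))
        · exact h
        · exact absurd hsum.symm (Nat.ne_of_lt (key y x r T h hy hch' hlen' hpb'))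
      subst hxy
      have htl : T.length + 1 ≤ k := by simpa using hlen
      have htl' : r.length + 1 ≤ k := by simpa using hlen'
      have hsum' : sumRep (k-1) T = sumRep (k-1) r := by
        simp [sumRep] at hsum
        omega
      rw [ih r (k-1) hch.tail hch'.tail (by omega) (by omega)
        (pb_tail hpb) (pb_tail hpb') hsum']

lemma pb_append (A B : List ℕ) (k : ℕ)
    (hA : ∀ j : Fin A.length, k - (j:ℕ) ≤ A.get j)
    (hB : ∀ j : Fin B.length, k - A.length - (j:ℕ) ≤ B.get j) :
    ∀ j : Fin (A ++ B).length, k - (j:ℕ) ≤ (A ++ B).get j := by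
  intro j
  obtain ⟨jv, hj⟩ := j
  rw [List.get_eq_getElem]
  simp only [List.length_append] at hj
  simp only [Fin.val_mk]
  by_cases hcase : jv < A.length
  · rw [List.getElem_append_left hcase]
    have := hA ⟨jv, hcase⟩
    rw [List.get_eq_getElem] at this
    exact this
  · rw [List.getElem_append_right (by omega : A.length ≤ jv)]
    have := hB ⟨jv - A.length, by omega⟩
    rw [List.get_eq_getElem] at this
    simp only [Fin.val_mk] at this
    omega

lemma pb_dec (n c k : ℕ) (h : k ≤ n) :
    ∀ j : Fin (dec n c).length, k - (j:ℕ) ≤ (dec n c).get j := by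
  intro j
  rw [List.get_eq_getElem, dec_getElem n c _ j.isLt]
  omega

/-- For `d ≥ 3`, `n ≥ 2d` and `a = C(n,d) - 2d + 1`, one has
`a^{(d-1)} = C(n,d-1) - 1` if `2d ≤ n ≤ 3d-2`, and `a^{(d-1)} = C(n,d-1)` if
`n ≥ 3d-1`; in particular `a^{(d-1)} ≥ C(n,d-1) - 2(d-1) + 1`. -/
theorem stmt16 (d n : ℕ) (hd : 3 ≤ d) (hn : 2 * d ≤ n)
    (L : List ℕ) (hL : IsMacaulayRep d (Nat.choose n d + 1 - 2 * d) L) :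
    (n ≤ 3 * d - 2 → shadowBound d L = Nat.choose n (d - 1) - 1) ∧
    (3 * d - 1 ≤ n → shadowBound d L = Nat.choose n (d - 1)) ∧
    Nat.choose n (d - 1) + 1 - 2 * (d - 1) ≤ shadowBound d L := by
  obtain ⟨hne, hlen, hch, hpb, hsum⟩ := hL
  rw [sum_eq_sumRep] at hsum
  have hsh : shadowBound d L = sumRep (d-1) L := sum_eq_sumRep L (d-1)
  rcases lt_trichotomy n (3*d-2) with hc | hc | hc
  · -- 2d ≤ n ≤ 3d - 3
    have hchE : (dec (n-1) (d-2) ++ [n-d, 2*n+2-4*d]).Chain' (· > ·) := by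
      rw [List.Chain', List.isChain_append]
      refine ⟨dec_chain _ _ (by omega), ?_, ?_⟩
      · rw [List.isChain_cons_cons]
        exact ⟨by omega, List.isChain_singleton _⟩
      · intro a ha b hb
        rw [dec_getLast? _ _ (by omega)] at ha
        simp at ha hb
        omega
    have hlenE : (dec (n-1) (d-2) ++ [n-d, 2*n+2-4*d]).length = d := by
      simp [dec_length]; omega
    have hpbE : ∀ j : Fin (dec (n-1) (d-2) ++ [n-d, 2*n+2-4*d]).length,
        d - (j:ℕ) ≤ (dec (n-1) (d-2) ++ [n-d, 2*n+2-4*d]).get j := by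
      apply pb_append
      · exact pb_dec _ _ _ (by omega)
      · intro j
        fin_cases j <;> simp [dec_length] <;> omega
    have H := hs (d-2) d (n-1) (by omega) (by omega)
    rw [show n - 1 + 1 = n by omega, show n - (d-2) = n - d + 2 by omega,
      show d - (d-2) = 2 by omega] at H
    have p1 : Nat.choose (n-d+2) 2 = Nat.choose (n-d+1) 1 + Nat.choose (n-d+1) 2 :=
      Nat.choose_succ_succ _ _
    have p2 : Nat.choose (n-d+1) 2 = Nat.choose (n-d) 1 + Nat.choose (n-d) 2 :=
      Nat.choose_succ_succ _ _
    have hsE : sumRep d (dec (n-1) (d-2) ++ [n-d, 2*n+2-4*d])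
        = Nat.choose n d + 1 - 2*d := by
      rw [sumRep_append, dec_length, show d - (d-2) = 2 by omega]
      have hlist : sumRep 2 [n-d, 2*n+2-4*d] = Nat.choose (n-d) 2 + (2*n+2-4*d) := by
        simp [sumRep]
      rw [Nat.choose_one_right] at p1 p2
      omega
    have hLE : L = dec (n-1) (d-2) ++ [n-d, 2*n+2-4*d] :=
      uniq _ _ d hch hchE hlen (by omega) hpb hpbE (by omega)
    subst hLE
    have H2 := hs (d-2) (d-1) (n-1) (by omega) (by omega)
    rw [show n - 1 + 1 = n by omega, show n - (d-2) = n - d + 2 by omega,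
      show d - 1 - (d-2) = 1 by omega] at H2
    have hv : sumRep (d-1) (dec (n-1) (d-2) ++ [n-d, 2*n+2-4*d])
        = Nat.choose n (d-1) - 1 := by
      rw [sumRep_append, dec_length, show d - 1 - (d-2) = 1 by omega]
      have hlist2 : sumRep 1 [n-d, 2*n+2-4*d] = (n-d) + 1 := by
        simp [sumRep]
      rw [Nat.choose_one_right] at H2
      omega
    refine ⟨fun _ => by omega, fun h => by omega, by omega⟩
  · -- n = 3d - 2
    have hchE : (dec (n-1) (d-1)).Chain' (· > ·) := dec_chain _ _ (by omega)
    have hlenE : (dec (n-1) (d-1)).length = d - 1 := dec_length _ _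
    have hpbE : ∀ j : Fin (dec (n-1) (d-1)).length,
        d - (j:ℕ) ≤ (dec (n-1) (d-1)).get j := pb_dec _ _ _ (by omega)
    have H := hs (d-1) d (n-1) (by omega) (by omega)
    rw [show n - 1 + 1 = n by omega, show n - (d-1) = n - d + 1 by omega,
      show d - (d-1) = 1 by omega, Nat.choose_one_right] at H
    have hsE : sumRep d (dec (n-1) (d-1)) = Nat.choose n d + 1 - 2*d := by omega
    have hLE : L = dec (n-1) (d-1) :=
      uniq _ _ d hch hchE hlen (by omega) hpb hpbE (by omega)
    subst hLE
    have H2 := hs (d-1) (d-1) (n-1) (by omega) (by omega)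
    rw [show n - 1 + 1 = n by omega, show n - (d-1) = n - d + 1 by omega,
      Nat.sub_self, Nat.choose_zero_right] at H2
    refine ⟨fun _ => by omega, fun h => by omega, by omega⟩
  · -- n ≥ 3d - 1
    have hchE : (dec (n-1) (d-1) ++ [n+2-3*d]).Chain' (· > ·) := by
      rw [List.Chain', List.isChain_append]
      refine ⟨dec_chain _ _ (by omega), List.isChain_singleton _, ?_⟩
      intro a ha b hb
      rw [dec_getLast? _ _ (by omega)] at ha
      simp at ha hb
      omega
    have hlenE : (dec (n-1) (d-1) ++ [n+2-3*d]).length = d := by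
      simp [dec_length]; omega
    have hpbE : ∀ j : Fin (dec (n-1) (d-1) ++ [n+2-3*d]).length,
        d - (j:ℕ) ≤ (dec (n-1) (d-1) ++ [n+2-3*d]).get j := by
      apply pb_append
      · exact pb_dec _ _ _ (by omega)
      · intro j
        fin_cases j <;> simp [dec_length] <;> omega
    have H := hs (d-1) d (n-1) (by omega) (by omega)
    rw [show n - 1 + 1 = n by omega, show n - (d-1) = n - d + 1 by omega,
      show d - (d-1) = 1 by omega, Nat.choose_one_right] at H
    have hsE : sumRep d (dec (n-1) (d-1) ++ [n+2-3*d]) = Nat.choose n d + 1 - 2*d := by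
      rw [sumRep_append, dec_length, show d - (d-1) = 1 by omega]
      simp only [sumRep, Nat.choose_one_right]
      omega
    have hLE : L = dec (n-1) (d-1) ++ [n+2-3*d] :=
      uniq _ _ d hch hchE hlen (by omega) hpb hpbE (by omega)
    subst hLE
    have H2 := hs (d-1) (d-1) (n-1) (by omega) (by omega)
    rw [show n - 1 + 1 = n by omega, show n - (d-1) = n - d + 1 by omega,
      Nat.sub_self, Nat.choose_zero_right] at H2
    have hv : sumRep (d-1) (dec (n-1) (d-1) ++ [n+2-3*d]) = Nat.choose n (d-1) := by
      rw [sumRep_append, dec_length, Nat.sub_self]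
      simp only [sumRep, Nat.choose_zero_right]
      omega
    refine ⟨fun h => by omega, fun _ => by omega, by omega⟩
end

section
/- Let d ≥ 3 and n ≥ 2d, and set a = C(n,d) - 2d + 1. The d-th binomial (Macaulay) expansion of a is Σ_{i=1}^{d-2} C(n-i, d-i+1) plus: C(n-d,2) + C(2n-4d+2,1) if 2d ≤ n ≤ 3d-3; C(n-d+1,2) if n = 3d-2; C(n-d+1,2) + C(n-3d+2,1) if n ≥ 3d-1. -/
namespace Stmt17Aux

def S (d : ℕ) (L : List ℕ) : ℕ := ∑ j : Fin L.length, Nat.choose (L.get j) (d - (j : ℕ))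

def B (d : ℕ) (L : List ℕ) : Prop := ∀ j : Fin L.length, d - (j : ℕ) ≤ L.get j

lemma S_nil (d : ℕ) : S d [] = 0 := rfl

lemma S_cons (d a : ℕ) (L : List ℕ) : S d (a :: L) = a.choose d + S (d-1) L := by
  simp only [S, List.length_cons, Fin.sum_univ_succ, List.get_cons_succ,
    Fin.val_zero, Nat.sub_zero, Fin.val_succ]
  congr 1
  apply Finset.sum_congr rfl
  intro j _
  congr 1
  omega

lemma B_nil (d : ℕ) : B d [] := fun j => j.elim0

lemma B_cons (d a : ℕ) (L : List ℕ) (h1 : d ≤ a) (h2 : B (d-1) L) : B d (a :: L) := by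
  intro j
  induction j using Fin.cases with
  | zero => simpa using h1
  | succ j =>
    have := h2 j
    have e : (a :: L).get j.succ = L.get j := rfl
    rw [e, Fin.val_succ]
    omega

lemma pref_succ (k n : ℕ) :
    (List.range (k+1)).map (fun i => n - 1 - i)
      = (n-1) :: (List.range k).map (fun i => (n-1) - 1 - i) := by
  rw [List.range_succ_eq_map, List.map_cons, List.map_map]
  congr 1
  apply List.map_congr_left
  intro i _
  simp [Function.comp]
  omega

lemma S_prefix (k : ℕ) : ∀ d n : ℕ, ∀ T : List ℕ, k ≤ d → d ≤ n →
    S d ((List.range k).map (fun i => n - 1 - i) ++ T) + Nat.choose (n-k) (d-k)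
      = Nat.choose n d + S (d-k) T := by
  induction k with
  | zero => intro d n T _ _; simp only [List.range_zero, List.map_nil, List.nil_append, Nat.sub_zero]; omega
  | succ k ih =>
    intro d n T hk hd
    rw [pref_succ, List.cons_append, S_cons]
    have H := ih (d-1) (n-1) T (by omega) (by omega)
    obtain ⟨d', rfl⟩ : ∃ d', d = d'+1 := ⟨d-1, by omega⟩
    obtain ⟨n', rfl⟩ : ∃ n', n = n'+1 := ⟨n-1, by omega⟩
    simp only [Nat.add_sub_cancel] at H ⊢
    rw [Nat.choose_succ_succ']
    have e1 : n' + 1 - (k+1) = n' - k := by omega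
    have e2 : d' + 1 - (k+1) = d' - k := by omega
    rw [e1, e2]
    omega

lemma chain_prefix (k : ℕ) : ∀ n : ℕ, ∀ T : List ℕ, k + 1 ≤ n → List.Chain' (· > ·) T →
    (∀ y ∈ T.head?, y < n - k) →
    List.Chain' (· > ·) ((List.range k).map (fun i => n - 1 - i) ++ T) := by
  induction k with
  | zero => intro n T _ hT _; simpa using hT
  | succ k ih =>
    intro n T hn hT hh
    rw [pref_succ, List.cons_append]
    rw [List.Chain', List.isChain_cons]
    constructor
    · intro y hy
      cases k with
      | zero =>
        simp at hy
        have := hh y hy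
        omega
      | succ k' =>
        rw [pref_succ, List.cons_append] at hy
        simp at hy
        omega
    · exact ih (n-1) T (by omega) hT (by intro y hy; have := hh y hy; omega)

lemma B_prefix (k : ℕ) : ∀ d n : ℕ, ∀ T : List ℕ, k ≤ d → d < n → B (d-k) T →
    B d ((List.range k).map (fun i => n - 1 - i) ++ T) := by
  induction k with
  | zero => intro d n T _ _ h; simpa using h
  | succ k ih =>
    intro d n T hk hd hT
    rw [pref_succ, List.cons_append]
    apply B_cons
    · omega
    · apply ih (d-1) (n-1) T (by omega) (by omega)
      have : d - 1 - k = d - (k+1) := by omega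
      rw [this]; exact hT

end Stmt17Aux
namespace Stmt17Aux

lemma pas (m : ℕ) : Nat.choose (m+1) 2 = m + Nat.choose m 2 := by
  rw [Nat.choose_succ_succ']
  simp [Nat.choose_one_right]

lemma S_pair (x y : ℕ) : S 2 [x, y] = Nat.choose x 2 + y := by
  rw [S_cons, S_cons, S_nil]
  simp [Nat.choose_one_right]

lemma S_single (x : ℕ) : S 2 [x] = Nat.choose x 2 := by
  rw [S_cons, S_nil]
  simp

lemma main_aux (d n : ℕ) (T : List ℕ) (hd : 3 ≤ d) (hn : 2*d ≤ n)
    (hTlen : T.length ≤ 2) (hTne : T ≠ [])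
    (hTchain : List.Chain' (· > ·) T)
    (hThead : ∀ y ∈ T.head?, y < n - (d-2))
    (hTB : B 2 T)
    (hTsum : S 2 T + 2*d = Nat.choose (n - (d-2)) 2 + 1) :
    IsMacaulayRep d (Nat.choose n d + 1 - 2*d)
      ((List.range (d-2)).map (fun i => n-1-i) ++ T) := by
  have hk2 : d - (d-2) = 2 := by omega
  refine ⟨?_, ?_, ?_, ?_, ?_⟩
  · intro h
    rw [List.append_eq_nil_iff] at h
    exact hTne h.2
  · simp only [List.length_append, List.length_map, List.length_range]
    omega
  · exact chain_prefix (d-2) n T (by omega) hTchain hThead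
  · have := B_prefix (d-2) d n T (by omega) (by omega) (by rw [hk2]; exact hTB)
    exact this
  · have H := S_prefix (d-2) d n T (by omega) (by omega)
    rw [hk2] at H
    show _ = S d _
    omega

end Stmt17Aux

/-- For `d ≥ 3`, `n ≥ 2d`, `a = C(n,d) - 2d + 1`, the `d`-th
binomial expansion of `a` is `[n-1, n-2, …, n-d+2]` (degrees `d, d-1, …, 3`)
followed by: `[n-d, 2n-4d+2]` if `2d ≤ n ≤ 3d-3`; `[n-d+1]` if `n = 3d-2`;
`[n-d+1, n-3d+2]` if `n ≥ 3d-1`. -/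
theorem stmt17 (d n : ℕ) (hd : 3 ≤ d) (hn : 2 * d ≤ n) :
    IsMacaulayRep d (Nat.choose n d + 1 - 2 * d)
      ((List.range (d - 2)).map (fun i => n - 1 - i) ++
        (if n + 3 ≤ 3 * d then [n - d, 2 * n + 2 - 4 * d]
         else if n + 2 = 3 * d then [n - d + 1]
         else [n - d + 1, n + 2 - 3 * d])) := by
  have hnd2 : n - (d-2) = (n-d) + 2 := by omega
  by_cases h1 : n + 3 ≤ 3 * d
  · rw [if_pos h1]
    apply Stmt17Aux.main_aux d n _ hd hn
    · simp
    · simp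
    · simp only [List.Chain', List.isChain_cons_cons, List.isChain_singleton, and_true]
      omega
    · intro y hy
      simp at hy
      omega
    · exact Stmt17Aux.B_cons 2 _ _ (by omega)
        (Stmt17Aux.B_cons 1 _ _ (by omega) (Stmt17Aux.B_nil 0))
    · rw [Stmt17Aux.S_pair, hnd2, show n - d + 2 = (n-d+1)+1 from rfl,
        Stmt17Aux.pas, Stmt17Aux.pas]
      omega
  · rw [if_neg h1]
    by_cases h2 : n + 2 = 3 * d
    · rw [if_pos h2]
      apply Stmt17Aux.main_aux d n _ hd hn
      · simp
      · simp
      · exact List.isChain_singleton _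
      · intro y hy
        simp at hy
        omega
      · exact Stmt17Aux.B_cons 2 _ _ (by omega) (Stmt17Aux.B_nil 1)
      · rw [Stmt17Aux.S_single, hnd2, show n - d + 2 = (n-d+1)+1 from rfl,
          Stmt17Aux.pas, Stmt17Aux.pas, Stmt17Aux.pas]
        omega
    · rw [if_neg h2]
      apply Stmt17Aux.main_aux d n _ hd hn
      · simp
      · simp
      · simp only [List.Chain', List.isChain_cons_cons, List.isChain_singleton, and_true]
        omega
      · intro y hy
        simp at hy
        omega
      · exact Stmt17Aux.B_cons 2 _ _ (by omega)
          (Stmt17Aux.B_cons 1 _ _ (by omega) (Stmt17Aux.B_nil 0))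
      · rw [Stmt17Aux.S_pair, hnd2, show n - d + 2 = (n-d+1)+1 from rfl,
          Stmt17Aux.pas, Stmt17Aux.pas, Stmt17Aux.pas]
        omega
end
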